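/- Fix γ ∈ (0,2) with γ² irrational, a real P ≠ 0, and an integer n ≥ 1; set Q := γ/2 + 2/γ. For χ ∈ {γ/2, 2/γ} and α ∈ ℂ let l := χ²/2 − αχ/2 and Y_n(χ,α) := [Γ(1/2 − l/2 + (iχ/2)√(P²+2n))·Γ(1/2 − l/2 − (iχ/2)√(P²+2n))·Γ(1 + l/2 + iχP/2)·Γ(1 + l/2 − iχP/2)] / [Γ(1 + l/2 + (iχ/2)√(P²+2n))·Γ(1 + l/2 − (iχ/2)√(P²+2n))·Γ(1/2 − l/2 + iχP/2)·Γ(1/2 − l/2 − iχP/2)], where Γ is the complex Gamma function; for real α all Gamma arguments have nonzero imaginary part, so Y_n(χ,α) is finite and nonzero for α ∈ ℝ. Let V ⊆ ℂ be a connected open set containing the real interval (−4/γ, 2Q), let Z : {γ/2, 2/γ} × ℝ → ℂ be an arbitrary function, and let X¹, X² be meromorphic functions on V. Assume that for each i ∈ {1,2}, each χ ∈ {γ/2, 2/γ}, and every α ∈ (−4/γ + χ, 2Q − χ) such that Xⁱ is analytic at both α − χ and α + χ, one has Xⁱ(α − χ) = Y_n(χ,α)·Xⁱ(α + χ) + Z(χ,α).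 If there exists α₀ ∈ (−2/γ, γ + 2/γ) at which X¹ and X² are both analytic and X¹(α₀) = X²(α₀), then X¹(α) = X²(α) for every α ∈ V at which both X¹ and X² are analytic. -/

import Mathlib

open Real Complex Set

/-- The coefficient `Y_n(χ,α)` of the homogeneous part of the shift equations. -/
noncomputable def Yshift (P : ℝ) (n : ℕ) (χ α : ℝ) : ℂ :=
  (Complex.Gamma (1 / 2 - ((χ : ℂ) ^ 2 / 2 - (α : ℂ) * (χ : ℂ) / 2) / 2 +
      Complex.I * (χ : ℂ) / 2 * (Real.sqrt (P ^ 2 + 2 * n) : ℂ)) *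
    Complex.Gamma (1 / 2 - ((χ : ℂ) ^ 2 / 2 - (α : ℂ) * (χ : ℂ) / 2) / 2 -
      Complex.I * (χ : ℂ) / 2 * (Real.sqrt (P ^ 2 + 2 * n) : ℂ)) *
    Complex.Gamma (1 + ((χ : ℂ) ^ 2 / 2 - (α : ℂ) * (χ : ℂ) / 2) / 2 +
      Complex.I * (χ : ℂ) * (P : ℂ) / 2) *
    Complex.Gamma (1 + ((χ : ℂ) ^ 2 / 2 - (α : ℂ) * (χ : ℂ) / 2) / 2 -
      Complex.I * (χ : ℂ) * (P : ℂ) / 2)) /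
  (Complex.Gamma (1 + ((χ : ℂ) ^ 2 / 2 - (α : ℂ) * (χ : ℂ) / 2) / 2 +
      Complex.I * (χ : ℂ) / 2 * (Real.sqrt (P ^ 2 + 2 * n) : ℂ)) *
    Complex.Gamma (1 + ((χ : ℂ) ^ 2 / 2 - (α : ℂ) * (χ : ℂ) / 2) / 2 -
      Complex.I * (χ : ℂ) / 2 * (Real.sqrt (P ^ 2 + 2 * n) : ℂ)) *
    Complex.Gamma (1 / 2 - ((χ : ℂ) ^ 2 / 2 - (α : ℂ) * (χ : ℂ) / 2) / 2 +
      Complex.I * (χ : ℂ) * (P : ℂ) / 2) *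
    Complex.Gamma (1 / 2 - ((χ : ℂ) ^ 2 / 2 - (α : ℂ) * (χ : ℂ) / 2) / 2 -
      Complex.I * (χ : ℂ) * (P : ℂ) / 2))

/-!
Put `D := X₁ - X₂`. Subtracting the two shift equations removes `Z`, and `Y_n(χ, ·)` extends
holomorphically and without zeros to a neighbourhood of the real line (all its Gamma arguments are
non-real there), so the meromorphic order of `D` at `α - χ` equals the one at `α + χ`. Thus
`t ↦ ord_t D` is invariant under the translations by `γ` and `4/γ` inside `(-4/γ, 2Q)`. Reducing
modulo `γ`, the orbit of `α₀` under the rotation by `4/γ`, which is irrational because `γ²` is,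
gives infinitely many points of `[0, γ)` at which `D` has the same order as at `α₀`; that order is
positive since `D(α₀) = 0`. A meromorphic function has only finitely many zeros and poles on a
compact set, so this order is `∞`: `D` vanishes near `α₀`, hence near every point of the connected
set `V`.
-/

open Filter Topology

def PeriodicWithin {β : Type*} (F : ℝ → β) (c : ℝ) (J : Set ℝ) : Prop :=
  ∀ u ∈ J, u + c ∈ J → F u = F (u + c)

namespace PeriodicWithin

variable {β : Type*} {F : ℝ → β} {c : ℝ} {J : Set ℝ}

theorem eq_add_nat_mul (hF : PeriodicWithin F c J) (hJ : J.OrdConnected) {v : ℝ} (hv : v ∈ J) :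
    ∀ k : ℕ, v + k * c ∈ J → F v = F (v + k * c)
  | 0, _ => by simp
  | k + 1, hk => by
    push_cast at hk ⊢
    have hmid : v + k * c ∈ J := hJ.uIcc_subset hv hk <| by
      rcases le_total 0 c with h | h
      · exact mem_uIcc_of_le (by nlinarith [k.cast_nonneg (α := ℝ)]) (by linarith)
      · exact mem_uIcc_of_ge (by linarith) (by nlinarith [k.cast_nonneg (α := ℝ)])
    rw [eq_add_nat_mul hF hJ hv k hmid, hF _ hmid (by rwa [add_assoc, ← add_one_mul]),
      add_one_mul, add_assoc]

theorem eq_add_int_mul (hF : PeriodicWithin F c J) (hJ : J.OrdConnected) {v : ℝ} (hv : v ∈ J)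
    (k : ℤ) (hk : v + k * c ∈ J) : F v = F (v + k * c) := by
  obtain ⟨m, rfl | rfl⟩ := k.eq_nat_or_neg
  · exact_mod_cast hF.eq_add_nat_mul hJ hv m hk
  · simpa using (hF.eq_add_nat_mul hJ hk m (by simpa using hv)).symm

theorem eq_toIcoMod {a : ℝ} (hF : PeriodicWithin F a J) (hJ : J.OrdConnected) (ha : 0 < a)
    (hIco : Ico 0 a ⊆ J) {v : ℝ} (hv : v ∈ J) : F v = F (toIcoMod ha 0 v) := by
  have h : toIcoMod ha 0 v = v + ((-toIcoDiv ha 0 v : ℤ) : ℝ) * a := by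
    rw [toIcoMod, zsmul_eq_mul]; push_cast; ring
  rw [h]
  exact hF.eq_add_int_mul hJ hv _ (hIco (h ▸ toIcoMod_mem_Ico' ha v))

theorem infinite_setOf_eq {a b : ℝ} (ha : 0 < a) (hb : 0 < b) (hab : Irrational (a / b))
    (hFa : PeriodicWithin F a (Ioo (-b) (a + b))) (hFb : PeriodicWithin F b (Ioo (-b) (a + b)))
    {x₀ : ℝ} (hx₀ : x₀ ∈ Ioo (-b) (a + b)) : {u ∈ Ico 0 a | F u = F x₀}.Infinite := by
  have hIco : Ico 0 a ⊆ Ioo (-b) (a + b) := Ico_subset_Ioo (by linarith) (by linarith)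
  set p : ℕ → ℝ := fun m => toIcoMod ha 0 (x₀ + m * b)
  have hp_mem (m : ℕ) : p m ∈ Ico 0 a := toIcoMod_mem_Ico' ha _
  have hp_succ (m : ℕ) : p (m + 1) = toIcoMod ha 0 (p m + b) := by
    refine (toIcoMod_eq_toIcoMod ha).2 ⟨-toIcoDiv ha 0 (x₀ + m * b), ?_⟩
    rw [neg_smul, ← self_sub_toIcoMod]
    push_cast
    ring
  have hp_eq (m : ℕ) : F (p m) = F x₀ := by
    induction m with
    | zero => simpa [p] using (hFa.eq_toIcoMod ordConnected_Ioo ha hIco hx₀).symm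
    | succ m ih =>
      have hpb : p m + b ∈ Ioo (-b) (a + b) :=
        ⟨by linarith [(hp_mem m).1], by linarith [(hp_mem m).2]⟩
      rw [hp_succ, ← hFa.eq_toIcoMod ordConnected_Ioo ha hIco hpb, ← hFb _ (hIco (hp_mem m)) hpb,
        ih]
  have hp_inj : Function.Injective p := by
    intro m m' h
    obtain ⟨n, hn⟩ := (toIcoMod_eq_toIcoMod ha).1 h
    rw [zsmul_eq_mul] at hn
    by_contra hne
    have hn0 : n ≠ 0 := by
      rintro rfl
      rw [Int.cast_zero, zero_mul, sub_eq_zero] at hn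
      exact hne (by exact_mod_cast (mul_right_cancel₀ hb.ne' (add_left_cancel hn)).symm)
    refine (irrational_iff_ne_rational _).1 hab (m' - m) n hn0 ?_
    rw [div_eq_div_iff hb.ne' (by exact_mod_cast hn0)]
    push_cast
    linarith
  exact Set.infinite_of_injective_forall_mem hp_inj fun m => ⟨hp_mem m, hp_eq m⟩

end PeriodicWithin

theorem Continuous.tendsto_nhdsNE_of_injective {X Y : Type*} [TopologicalSpace X]
    [TopologicalSpace Y] {g : X → Y} (hg : Continuous g) (hinj : Function.Injective g) (x : X) :
    Tendsto g (𝓝[≠] x) (𝓝[≠] (g x)) :=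
  tendsto_nhdsWithin_of_tendsto_nhds_of_eventually_within _
    (hg.tendsto x |>.mono_left nhdsWithin_le_nhds)
    (eventually_mem_nhdsWithin.mono fun _ ht => hinj.ne ht)

section Meromorphic

variable {𝕜 : Type*} [NontriviallyNormedField 𝕜]

theorem AnalyticAt.meromorphicOrderAt_pos_iff {E : Type*} [NormedAddCommGroup E]
    [NormedSpace 𝕜 E] {f : 𝕜 → E} {x : 𝕜} (hf : AnalyticAt 𝕜 f x) :
    0 < meromorphicOrderAt f x ↔ f x = 0 := by
  rw [← tendsto_zero_iff_meromorphicOrderAt_pos hf.meromorphicAt]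
  have hcont := hf.continuousAt.continuousWithinAt (s := {x}ᶜ)
  exact ⟨tendsto_nhds_unique hcont, fun h => h ▸ hcont⟩

theorem MeromorphicOn.meromorphicOrderAt_eq_top_of_infinite {E : Type*} [NormedAddCommGroup E]
    [NormedSpace 𝕜 E] {f : 𝕜 → E} {K : Set 𝕜} (hf : MeromorphicOn f K) (hK : IsCompact K)
    {o : WithTop ℤ} (ho : o ≠ 0) (h : {z ∈ K | meromorphicOrderAt f z = o}.Infinite) : o = ⊤ := by
  by_contra htop
  refine ((MeromorphicOn.divisor f K).finiteSupport hK).not_infinite (h.mono ?_)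
  rintro z ⟨hz, hzo⟩
  simp [hf.divisor_apply hz, hzo, ho, htop]

theorem MeromorphicOn.eq_zero_of_meromorphicOrderAt_eq_top {E : Type*} [NormedAddCommGroup E]
    [NormedSpace 𝕜 E] {f : 𝕜 → E} {U : Set 𝕜} (hf : MeromorphicOn f U) (hU : IsPreconnected U)
    {x z : 𝕜} (hx : x ∈ U) (htop : meromorphicOrderAt f x = ⊤) (hz : z ∈ U)
    (hfz : AnalyticAt 𝕜 f z) : f z = 0 := by
  have hz_top : meromorphicOrderAt f z = ⊤ := by
    by_contra hne
    exact hf.meromorphicOrderAt_ne_top_of_isPreconnected hU hz hx hne htop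
  exact hfz.meromorphicOrderAt_pos_iff.1 (hz_top ▸ WithTop.coe_lt_top 0)

theorem meromorphicOrderAt_sub_eq_add_of_frequently [CompleteSpace 𝕜] {f Y : 𝕜 → 𝕜} {x c : 𝕜}
    (hY : AnalyticAt 𝕜 Y x) (hYx : Y x ≠ 0) (hf_sub : MeromorphicAt f (x - c))
    (hf_add : MeromorphicAt f (x + c)) (h : ∃ᶠ w in 𝓝[≠] x, f (w - c) = Y w * f (w + c)) :
    meromorphicOrderAt f (x - c) = meromorphicOrderAt f (x + c) := by
  have hm_sub : MeromorphicAt (fun w => f (w - c)) x :=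
    meromorphicAt_fun_comp_sub_const_iff_meromorphicAt.2 hf_sub
  have hm_add : MeromorphicAt (fun w => f (w + c)) x :=
    meromorphicAt_fun_comp_add_const_iff_meromorphicAt.2 hf_add
  have heq := (hm_sub.frequently_eq_iff_eventuallyEq (hY.meromorphicAt.mul hm_add)).1 h
  rw [← meromorphicOrderAt_fun_comp_sub_const_eq_meromorphicOrderAt, meromorphicOrderAt_congr heq,
    meromorphicOrderAt_mul_of_ne_zero hY hYx,
    meromorphicOrderAt_fun_comp_add_const_eq_meromorphicOrderAt]

end Meromorphic

theorem meromorphicOrderAt_sub_eq_add_of_shift_eq {f₁ f₂ Y : ℂ → ℂ} {z : ℝ → ℂ} {c α : ℝ}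
    {s : Set ℝ} (hs : s ∈ 𝓝 α) (hY : AnalyticAt ℂ Y α) (hYα : Y α ≠ 0) {V : Set ℂ}
    (hf₁ : MeromorphicOn f₁ V) (hf₂ : MeromorphicOn f₂ V)
    (hV_sub : ((α - c : ℝ) : ℂ) ∈ V) (hV_add : ((α + c : ℝ) : ℂ) ∈ V)
    (h₁ : ∀ t ∈ s, AnalyticAt ℂ f₁ ((t - c : ℝ) : ℂ) → AnalyticAt ℂ f₁ ((t + c : ℝ) : ℂ) →
      f₁ ((t - c : ℝ) : ℂ) = Y t * f₁ ((t + c : ℝ) : ℂ) + z t)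
    (h₂ : ∀ t ∈ s, AnalyticAt ℂ f₂ ((t - c : ℝ) : ℂ) → AnalyticAt ℂ f₂ ((t + c : ℝ) : ℂ) →
      f₂ ((t - c : ℝ) : ℂ) = Y t * f₂ ((t + c : ℝ) : ℂ) + z t) :
    meromorphicOrderAt (f₁ - f₂) ((α - c : ℝ) : ℂ) =
      meromorphicOrderAt (f₁ - f₂) ((α + c : ℝ) : ℂ) := by
  have h_shift (d : ℝ) :
      Tendsto (fun t : ℝ => ((t + d : ℝ) : ℂ)) (𝓝[≠] α) (𝓝[≠] ((α + d : ℝ) : ℂ)) :=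
    (by fun_prop : Continuous _).tendsto_nhdsNE_of_injective
      (ofReal_injective.comp (add_left_injective d)) α
  have h_sub := h_shift (-c)
  have h_add := h_shift c
  simp only [← sub_eq_add_neg] at h_sub
  have hev : ∀ᶠ t in 𝓝[≠] α,
      (f₁ - f₂) ((t - c : ℝ) : ℂ) = Y t * (f₁ - f₂) ((t + c : ℝ) : ℂ) := by
    filter_upwards [nhdsWithin_le_nhds hs,
      h_sub.eventually (hf₁ _ hV_sub).eventually_analyticAt,
      h_sub.eventually (hf₂ _ hV_sub).eventually_analyticAt,
      h_add.eventually (hf₁ _ hV_add).eventually_analyticAt,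
      h_add.eventually (hf₂ _ hV_add).eventually_analyticAt] with t ht h₁s h₂s h₁a h₂a
    simp only [Pi.sub_apply, h₁ t ht h₁s h₁a, h₂ t ht h₂s h₂a]
    ring
  -- the real points near `α` accumulate at `α` in `ℂ`, which the identity principle needs
  have hfreq : ∃ᶠ w in 𝓝[≠] (α : ℂ), (f₁ - f₂) (w - c) = Y w * (f₁ - f₂) (w + c) := by
    refine (continuous_ofReal.tendsto_nhdsNE_of_injective ofReal_injective α).frequently ?_
    push_cast at hev
    exact hev.frequently
  push_cast at hV_sub hV_add ⊢
  exact meromorphicOrderAt_sub_eq_add_of_frequently hY hYα ((hf₁ _ hV_sub).sub (hf₂ _ hV_sub))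
    ((hf₁ _ hV_add).sub (hf₂ _ hV_add)) hfreq

theorem MeromorphicOn.meromorphicOrderAt_eq_top_of_periodicWithin {E : Type*}
    [NormedAddCommGroup E] [NormedSpace ℂ E] {f : ℂ → E} {V : Set ℂ} (hf : MeromorphicOn f V)
    {a b : ℝ} (ha : 0 < a) (hb : 0 < b) (hab : Irrational (a / b))
    (hV : (fun t : ℝ => (t : ℂ)) '' Ioo (-b) (a + b) ⊆ V)
    (hfa : PeriodicWithin (fun t : ℝ => meromorphicOrderAt f t) a (Ioo (-b) (a + b)))
    (hfb : PeriodicWithin (fun t : ℝ => meromorphicOrderAt f t) b (Ioo (-b) (a + b)))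
    {x₀ : ℝ} (hx₀ : x₀ ∈ Ioo (-b) (a + b)) (h0 : meromorphicOrderAt f x₀ ≠ 0) :
    meromorphicOrderAt f x₀ = ⊤ := by
  have hKV : (fun t : ℝ => (t : ℂ)) '' Icc 0 a ⊆ V :=
    (image_mono (Icc_subset_Ioo (by linarith) (by linarith))).trans hV
  refine (hf.mono_set hKV).meromorphicOrderAt_eq_top_of_infinite
    (isCompact_Icc.image continuous_ofReal) h0 ?_
  refine ((hfa.infinite_setOf_eq ha hb hab hfb hx₀).image ofReal_injective.injOn).mono ?_
  rintro _ ⟨u, ⟨hu, hfu⟩, rfl⟩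
  exact ⟨mem_image_of_mem _ (Ico_subset_Icc_self hu), hfu⟩

theorem analyticAt_Gamma_of_im_ne_zero {z : ℂ} (hz : z.im ≠ 0) :
    AnalyticAt ℂ Complex.Gamma z := by
  have hopen : IsOpen {w : ℂ | w.im ≠ 0} := isOpen_ne.preimage continuous_im
  refine DifferentiableOn.analyticAt (fun w hw => ?_) (hopen.mem_nhds hz)
  exact (differentiableAt_Gamma w fun m hm => hw (by simp [hm])).differentiableWithinAt

theorem Gamma_ne_zero_of_im_ne_zero {z : ℂ} (hz : z.im ≠ 0) : Complex.Gamma z ≠ 0 :=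
  Gamma_ne_zero fun m hm => hz (by simp [hm])

/-- The holomorphic extension of `Yshift P n χ`: `Yshift P n χ α = Ycomplex P n χ α` by `rfl`. -/
noncomputable def Ycomplex (P : ℝ) (n : ℕ) (χ : ℝ) (w : ℂ) : ℂ :=
  (Complex.Gamma (1 / 2 - ((χ : ℂ) ^ 2 / 2 - w * (χ : ℂ) / 2) / 2 +
      Complex.I * (χ : ℂ) / 2 * (Real.sqrt (P ^ 2 + 2 * n) : ℂ)) *
    Complex.Gamma (1 / 2 - ((χ : ℂ) ^ 2 / 2 - w * (χ : ℂ) / 2) / 2 -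
      Complex.I * (χ : ℂ) / 2 * (Real.sqrt (P ^ 2 + 2 * n) : ℂ)) *
    Complex.Gamma (1 + ((χ : ℂ) ^ 2 / 2 - w * (χ : ℂ) / 2) / 2 +
      Complex.I * (χ : ℂ) * (P : ℂ) / 2) *
    Complex.Gamma (1 + ((χ : ℂ) ^ 2 / 2 - w * (χ : ℂ) / 2) / 2 -
      Complex.I * (χ : ℂ) * (P : ℂ) / 2)) /
  (Complex.Gamma (1 + ((χ : ℂ) ^ 2 / 2 - w * (χ : ℂ) / 2) / 2 +
      Complex.I * (χ : ℂ) / 2 * (Real.sqrt (P ^ 2 + 2 * n) : ℂ)) *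
    Complex.Gamma (1 + ((χ : ℂ) ^ 2 / 2 - w * (χ : ℂ) / 2) / 2 -
      Complex.I * (χ : ℂ) / 2 * (Real.sqrt (P ^ 2 + 2 * n) : ℂ)) *
    Complex.Gamma (1 / 2 - ((χ : ℂ) ^ 2 / 2 - w * (χ : ℂ) / 2) / 2 +
      Complex.I * (χ : ℂ) * (P : ℂ) / 2) *
    Complex.Gamma (1 / 2 - ((χ : ℂ) ^ 2 / 2 - w * (χ : ℂ) / 2) / 2 -
      Complex.I * (χ : ℂ) * (P : ℂ) / 2))

theorem analyticAt_Ycomplex_and_ne_zero {P : ℝ} (hP : P ≠ 0) (n : ℕ) {χ : ℝ} (hχ : 0 < χ) (α : ℝ) :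
    AnalyticAt ℂ (Ycomplex P n χ) α ∧ Ycomplex P n χ α ≠ 0 := by
  have hs : 0 < √(P ^ 2 + 2 * n) := Real.sqrt_pos.2 (by positivity)
  have hχ2 : ((χ : ℂ) ^ 2).im = 0 := by rw [← ofReal_pow, ofReal_im]
  unfold Ycomplex
  refine ⟨.div ?_ ?_ ?_, div_ne_zero ?_ ?_⟩
  all_goals repeat' first | apply AnalyticAt.mul | apply mul_ne_zero
  all_goals first
    | refine (analyticAt_Gamma_of_im_ne_zero ?_).comp (by fun_prop)
    | refine Gamma_ne_zero_of_im_ne_zero ?_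
  all_goals simp [hχ2, hχ.ne', hs.ne', hP]

theorem periodicWithin_meromorphicOrderAt_of_shift_eq {P : ℝ} (hP : P ≠ 0) {n : ℕ} {χ : ℝ}
    (hχ : 0 < χ) {a b : ℝ} {V : Set ℂ} (hV : (fun t : ℝ => (t : ℂ)) '' Ioo a b ⊆ V)
    {z : ℝ → ℂ} {X₁ X₂ : ℂ → ℂ} (hX₁ : MeromorphicOn X₁ V) (hX₂ : MeromorphicOn X₂ V)
    (h₁ : ∀ α ∈ Ioo (a + χ) (b - χ),
      AnalyticAt ℂ X₁ ((α - χ : ℝ) : ℂ) → AnalyticAt ℂ X₁ ((α + χ : ℝ) : ℂ) →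
      X₁ ((α - χ : ℝ) : ℂ) = Yshift P n χ α * X₁ ((α + χ : ℝ) : ℂ) + z α)
    (h₂ : ∀ α ∈ Ioo (a + χ) (b - χ),
      AnalyticAt ℂ X₂ ((α - χ : ℝ) : ℂ) → AnalyticAt ℂ X₂ ((α + χ : ℝ) : ℂ) →
      X₂ ((α - χ : ℝ) : ℂ) = Yshift P n χ α * X₂ ((α + χ : ℝ) : ℂ) + z α) :
    PeriodicWithin (fun t : ℝ => meromorphicOrderAt (X₁ - X₂) t) (2 * χ) (Ioo a b) := by
  intro u hu hu'
  obtain ⟨hY, hY0⟩ := analyticAt_Ycomplex_and_ne_zero hP n hχ (u + χ)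
  have hs : Ioo (a + χ) (b - χ) ∈ 𝓝 (u + χ) :=
    isOpen_Ioo.mem_nhds ⟨by linarith [hu.1], by linarith [hu'.2]⟩
  have h_sub : u + χ - χ ∈ Ioo a b := by rwa [add_sub_cancel_right]
  have h_add : u + χ + χ ∈ Ioo a b := by rwa [add_assoc, ← two_mul]
  have := meromorphicOrderAt_sub_eq_add_of_shift_eq hs hY hY0 hX₁ hX₂
    (hV (mem_image_of_mem _ h_sub)) (hV (mem_image_of_mem _ h_add)) h₁ h₂
  rwa [add_sub_cancel_right, add_assoc, ← two_mul] at this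

theorem shift_equations_unique_general {γ : ℝ} (hγ : γ ∈ Set.Ioo (0 : ℝ) 2)
    (hirr : Irrational (γ ^ 2)) {P : ℝ} (hP : P ≠ 0) {n : ℕ}
    (V : Set ℂ) (hVconn : IsConnected V)
    (hVsub : (fun t : ℝ => (t : ℂ)) '' Set.Ioo (-4 / γ) (2 * (γ / 2 + 2 / γ)) ⊆ V)
    (Z : ℝ → ℝ → ℂ) (X₁ X₂ : ℂ → ℂ)
    (hX₁ : MeromorphicOn X₁ V) (hX₂ : MeromorphicOn X₂ V)
    (hshift₁ : ∀ χ ∈ ({γ / 2, 2 / γ} : Set ℝ), ∀ α : ℝ,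
      α ∈ Set.Ioo (-4 / γ + χ) (2 * (γ / 2 + 2 / γ) - χ) →
      AnalyticAt ℂ X₁ ((α - χ : ℝ) : ℂ) → AnalyticAt ℂ X₁ ((α + χ : ℝ) : ℂ) →
      X₁ ((α - χ : ℝ) : ℂ) = Yshift P n χ α * X₁ ((α + χ : ℝ) : ℂ) + Z χ α)
    (hshift₂ : ∀ χ ∈ ({γ / 2, 2 / γ} : Set ℝ), ∀ α : ℝ,
      α ∈ Set.Ioo (-4 / γ + χ) (2 * (γ / 2 + 2 / γ) - χ) →
      AnalyticAt ℂ X₂ ((α - χ : ℝ) : ℂ) → AnalyticAt ℂ X₂ ((α + χ : ℝ) : ℂ) →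
      X₂ ((α - χ : ℝ) : ℂ) = Yshift P n χ α * X₂ ((α + χ : ℝ) : ℂ) + Z χ α)
    (α₀ : ℝ) (hα₀ : α₀ ∈ Set.Ioo (-2 / γ) (γ + 2 / γ))
    (hX₁α₀ : AnalyticAt ℂ X₁ ((α₀ : ℝ) : ℂ)) (hX₂α₀ : AnalyticAt ℂ X₂ ((α₀ : ℝ) : ℂ))
    (heq : X₁ ((α₀ : ℝ) : ℂ) = X₂ ((α₀ : ℝ) : ℂ)) :
    ∀ α ∈ V, AnalyticAt ℂ X₁ α → AnalyticAt ℂ X₂ α → X₁ α = X₂ α := by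
  have hγ0 : 0 < γ := hγ.1
  have hJ : Ioo (-4 / γ) (2 * (γ / 2 + 2 / γ)) = Ioo (-(4 / γ)) (γ + 4 / γ) := by
    rw [neg_div]; congr 1; ring
  have hD : MeromorphicOn (X₁ - X₂) V := hX₁.sub hX₂
  have hperiodic (χ : ℝ) (hχ : χ ∈ ({γ / 2, 2 / γ} : Set ℝ)) :
      PeriodicWithin (fun t : ℝ => meromorphicOrderAt (X₁ - X₂) t) (2 * χ)
        (Ioo (-(4 / γ)) (γ + 4 / γ)) := by
    have hχ0 : 0 < χ := by rcases hχ with rfl | rfl <;> positivity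
    exact hJ ▸ periodicWithin_meromorphicOrderAt_of_shift_eq hP hχ0 hVsub hX₁ hX₂
      (hshift₁ χ hχ) (hshift₂ χ hχ)
  rw [hJ] at hVsub
  have hirr' : Irrational (γ / (4 / γ)) := by
    convert hirr.div_natCast (m := 4) (by norm_num) using 1
    field_simp
    norm_num
  have hα₀J : α₀ ∈ Ioo (-(4 / γ)) (γ + 4 / γ) := by
    have : 2 / γ < 4 / γ := by gcongr; norm_num
    constructor <;> linarith [hα₀.1, hα₀.2, neg_div γ 2]
  have htop : meromorphicOrderAt (X₁ - X₂) α₀ = ⊤ :=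
    hD.meromorphicOrderAt_eq_top_of_periodicWithin hγ0 (by positivity) hirr' hVsub
      (by convert hperiodic (γ / 2) (by simp) using 1; ring)
      (by convert hperiodic (2 / γ) (by simp) using 1; ring) hα₀J
      ((hX₁α₀.sub hX₂α₀).meromorphicOrderAt_pos_iff.2 (sub_eq_zero.2 heq)).ne'
  intro α hα hX₁α hX₂α
  exact sub_eq_zero.1 (hD.eq_zero_of_meromorphicOrderAt_eq_top hVconn.isPreconnected
    (hVsub (mem_image_of_mem _ hα₀J)) htop hα (hX₁α.sub hX₂α))

/-- Proposition 7.2 (prop:shift-unique): two meromorphic solutions of the pair of shift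
equations with shifts `2χ`, `χ ∈ {γ/2, 2/γ}`, that agree at one point of
`(−2/γ, γ + 2/γ)` agree wherever both are analytic, provided `γ²` is irrational. -/
theorem shift_equations_unique {γ : ℝ} (hγ : γ ∈ Set.Ioo (0 : ℝ) 2)
    (hirr : Irrational (γ ^ 2)) {P : ℝ} (hP : P ≠ 0) {n : ℕ} (hn : 1 ≤ n)
    (V : Set ℂ) (hVopen : IsOpen V) (hVconn : IsConnected V)
    (hVsub : (fun t : ℝ => (t : ℂ)) '' Set.Ioo (-4 / γ) (2 * (γ / 2 + 2 / γ)) ⊆ V)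
    (Z : ℝ → ℝ → ℂ) (X₁ X₂ : ℂ → ℂ)
    (hX₁ : MeromorphicOn X₁ V) (hX₂ : MeromorphicOn X₂ V)
    (hshift₁ : ∀ χ ∈ ({γ / 2, 2 / γ} : Set ℝ), ∀ α : ℝ,
      α ∈ Set.Ioo (-4 / γ + χ) (2 * (γ / 2 + 2 / γ) - χ) →
      AnalyticAt ℂ X₁ ((α - χ : ℝ) : ℂ) → AnalyticAt ℂ X₁ ((α + χ : ℝ) : ℂ) →
      X₁ ((α - χ : ℝ) : ℂ) = Yshift P n χ α * X₁ ((α + χ : ℝ) : ℂ) + Z χ α)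
    (hshift₂ : ∀ χ ∈ ({γ / 2, 2 / γ} : Set ℝ), ∀ α : ℝ,
      α ∈ Set.Ioo (-4 / γ + χ) (2 * (γ / 2 + 2 / γ) - χ) →
      AnalyticAt ℂ X₂ ((α - χ : ℝ) : ℂ) → AnalyticAt ℂ X₂ ((α + χ : ℝ) : ℂ) →
      X₂ ((α - χ : ℝ) : ℂ) = Yshift P n χ α * X₂ ((α + χ : ℝ) : ℂ) + Z χ α)
    (α₀ : ℝ) (hα₀ : α₀ ∈ Set.Ioo (-2 / γ) (γ + 2 / γ))
    (hX₁α₀ : AnalyticAt ℂ X₁ ((α₀ : ℝ) : ℂ)) (hX₂α₀ : AnalyticAt ℂ X₂ ((α₀ : ℝ) : ℂ))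
    (heq : X₁ ((α₀ : ℝ) : ℂ) = X₂ ((α₀ : ℝ) : ℂ)) :
    ∀ α ∈ V, AnalyticAt ℂ X₁ α → AnalyticAt ℂ X₂ α → X₁ α = X₂ α :=
  shift_equations_unique_general hγ hirr hP V hVconn hVsub Z X₁ X₂ hX₁ hX₂ hshift₁ hshift₂ α₀ hα₀
    hX₁α₀ hX₂α₀ heq
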